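/- Let a, b, s, t be positive integers with s ≤ a ≤ b ≤ t. Then for every positive integer n, ex(n, K_{a,b}, K_{s,t}) ≤ C(t-1,a)·C(t-1-s,b-s)·C(n,s), where C(m,k) denotes the binomial coefficient. (In particular ex(n, K_{a,b}, K_{s,t}) = O(n^s).) -/

import Mathlib

open SimpleGraph

/-- `F` is contained in `G` as a subgraph, i.e. there is an injective graph
homomorphism from `F` to `G`. -/
def ContainsCopy {α β : Type*} (F : SimpleGraph α) (G : SimpleGraph β) : Prop :=
  ∃ f : F →g G, Function.Injective f

/-- `N(H,G)`: the number of subgraphs of `G` isomorphic to `H`. -/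
noncomputable def copyCount {α β : Type*} (H : SimpleGraph α) (G : SimpleGraph β) : ℕ :=
  Nat.card {G' : G.Subgraph // Nonempty (H ≃g G'.coe)}

/-- `ex(n,H,F)`: the maximum number of copies of `H` in an `F`-free graph on `n` vertices. -/
noncomputable def exGen (n : ℕ) {α β : Type*} (H : SimpleGraph α) (F : SimpleGraph β) : ℕ :=
  sSup {m | ∃ G : SimpleGraph (Fin n), ¬ ContainsCopy F G ∧ m = copyCount H G}

/-- The complete bipartite graph `K_{a,b}`. -/
abbrev Kbip (a b : ℕ) : SimpleGraph (Fin a ⊕ Fin b) := completeBipartiteGraph (Fin a) (Fin b)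

/-- `K̄_{a,b}`: obtained from `K_{a,b}` by adding all edges inside the part of size `a`. -/
def KbipBar (a b : ℕ) : SimpleGraph (Fin a ⊕ Fin b) :=
  SimpleGraph.fromRel (fun u _ => u.isLeft)

/-- `k` vertex-disjoint copies of `G`. -/
def disjCopies (k : ℕ) {α : Type*} (G : SimpleGraph α) : SimpleGraph (Fin k × α) :=
  SimpleGraph.fromRel (fun u v => u.1 = v.1 ∧ G.Adj u.2 v.2)

/-- The vertex-disjoint union of `G` and `H`. -/
def disjSum {α β : Type*} (G : SimpleGraph α) (H : SimpleGraph β) : SimpleGraph (α ⊕ β) :=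
  SimpleGraph.fromRel (fun u v =>
    (∃ x y, u = Sum.inl x ∧ v = Sum.inl y ∧ G.Adj x y) ∨
    (∃ x y, u = Sum.inr x ∧ v = Sum.inr y ∧ H.Adj x y))

/-- Placing a graph `G0` on the `Fin b`-part of the vertex set `Fin a ⊕ Fin b`. -/
def liftRight (a : ℕ) {b : ℕ} (G0 : SimpleGraph (Fin b)) : SimpleGraph (Fin a ⊕ Fin b) :=
  SimpleGraph.fromRel (fun u v => ∃ x y, u = Sum.inr x ∧ v = Sum.inr y ∧ G0.Adj x y)

/-!
A copy of `K_{a,b}` is determined by its two sides `(A, B)`, so it suffices to count the pairs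
with `|A| = a`, `|B| = b` and every vertex of `A` adjacent to every vertex of `B`. Fix an
`s`-subset `S ⊆ B`: there are at most `C(n,s)` of them. Since `G` is `K_{s,t}`-free, any
`s` or more vertices have fewer than `t` common neighbours. Now `A` lies in the common
neighbourhood of `S`, leaving at most `C(t-1,a)` choices, and `B \ S` lies in the common
neighbourhood of `A` minus `S`; as `|A| ≥ s`, this leaves at most `C(t-1-s,b-s)` choices.
-/

namespace Finset

variable {V : Type*} [DecidableEq V]

lemma card_le_choose_of_forall_subset_subset {𝒜 : Finset (Finset V)} {S U : Finset V} {b : ℕ}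
    (h𝒜 : ∀ B ∈ 𝒜, S ⊆ B ∧ B ⊆ U ∧ #B = b) : #𝒜 ≤ (#U - #S).choose (b - #S) := by
  obtain rfl | ⟨B₀, hB₀⟩ := 𝒜.eq_empty_or_nonempty
  · simp
  have hSU : S ⊆ U := (h𝒜 B₀ hB₀).1.trans (h𝒜 B₀ hB₀).2.1
  calc #𝒜 ≤ #((U \ S).powersetCard (b - #S)) := by
        refine card_le_card_of_injOn (· \ S) (fun B hB => ?_) (fun B hB B' hB' hBB' => ?_)
        · obtain ⟨-, hBU, hBcard⟩ := h𝒜 B hB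
          exact mem_powersetCard.2 ⟨sdiff_subset_sdiff hBU le_rfl,
            by rw [card_sdiff_of_subset (h𝒜 B hB).1, hBcard]⟩
        · rw [← sdiff_union_of_subset (h𝒜 B hB).1, ← sdiff_union_of_subset (h𝒜 B' hB').1]
          exact congrArg (· ∪ S) hBB'
    _ = (#U - #S).choose (b - #S) := by rw [card_powersetCard, card_sdiff_of_subset hSU]

end Finset

namespace SimpleGraph

open Finset Fintype

section CommonNeighbors

variable {V : Type*} [Fintype V] (G : SimpleGraph V) [DecidableRel G.Adj]

def commonNeighborFinset (S : Finset V) : Finset V := {v | ∀ x ∈ S, G.Adj x v}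

variable {G}

@[simp]
lemma mem_commonNeighborFinset {S : Finset V} {v : V} :
    v ∈ G.commonNeighborFinset S ↔ ∀ x ∈ S, G.Adj x v := by
  simp [commonNeighborFinset]

lemma subset_commonNeighborFinset_comm {A B : Finset V} :
    B ⊆ G.commonNeighborFinset A ↔ A ⊆ G.commonNeighborFinset B := by
  simp only [subset_iff, mem_commonNeighborFinset]
  exact ⟨fun h x hx y hy => (h hy x hx).symm, fun h x hx y hy => (h hy x hx).symm⟩

lemma commonNeighborFinset_anti {S S' : Finset V} (h : S ⊆ S') :
    G.commonNeighborFinset S' ⊆ G.commonNeighborFinset S := fun _ hv =>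
  mem_commonNeighborFinset.2 fun x hx => mem_commonNeighborFinset.1 hv x (h hx)

lemma card_commonNeighborFinset_lt {α β : Type*} [Fintype α] [Fintype β]
    (hfree : (completeBipartiteGraph α β).Free G) {S : Finset V} (hS : card α ≤ #S) :
    #(G.commonNeighborFinset S) < card β := by
  obtain ⟨S', hS'S, hS'⟩ := exists_subset_card_eq hS
  by_contra! h
  obtain ⟨T, hT, hTcard⟩ :=
    exists_subset_card_eq (h.trans (card_le_card (commonNeighborFinset_anti hS'S)))
  exact hfree <| completeBipartiteGraph_isContained_iff.2
    ⟨S', T, hS', hTcard, fun x hx y hy => mem_commonNeighborFinset.1 (hT hy) x hx⟩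

end CommonNeighbors

section Bicliques

variable {V : Type*} [Fintype V] [DecidableEq V] {G : SimpleGraph V} [DecidableRel G.Adj]

variable (G) in
def bicliqueFinset (a b : ℕ) : Finset (Finset V × Finset V) :=
  {p | #p.1 = a ∧ #p.2 = b ∧ p.2 ⊆ G.commonNeighborFinset p.1}

@[simp]
lemma mem_bicliqueFinset {a b : ℕ} {p : Finset V × Finset V} :
    p ∈ G.bicliqueFinset a b ↔ #p.1 = a ∧ #p.2 = b ∧ p.2 ⊆ G.commonNeighborFinset p.1 := by
  simp [bicliqueFinset]

variable {α β : Type*} [Fintype α] [Fintype β]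

lemma card_filter_superset_bicliqueFinset_le (hfree : (completeBipartiteGraph α β).Free G)
    {a b : ℕ} (ha : card α ≤ a) {S : Finset V} (hS : #S = card α) :
    #{p ∈ G.bicliqueFinset a b | S ⊆ p.2} ≤
      (card β - 1 - card α).choose (b - card α) * (card β - 1).choose a := by
  have hmaps : ∀ p ∈ {p ∈ G.bicliqueFinset a b | S ⊆ p.2},
      p.1 ∈ (G.commonNeighborFinset S).powersetCard a := by
    simp only [mem_filter, mem_bicliqueFinset, mem_powersetCard]
    exact fun p ⟨⟨hA, _, hB⟩, hSB⟩ => ⟨subset_commonNeighborFinset_comm.1 (hSB.trans hB), hA⟩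
  have hfiber : ∀ A ∈ (G.commonNeighborFinset S).powersetCard a,
      #{p ∈ {p ∈ G.bicliqueFinset a b | S ⊆ p.2} | p.1 = A} ≤
        (card β - 1 - card α).choose (b - card α) := by
    intro A hA
    have hcard := card_commonNeighborFinset_lt hfree (ha.trans (mem_powersetCard.1 hA).2.ge)
    rw [← card_image_of_injOn (f := Prod.snd) fun p hp q hq hpq => by
      rw [mem_coe, mem_filter] at hp hq
      exact Prod.ext (hp.2.trans hq.2.symm) hpq]
    refine (card_le_choose_of_forall_subset_subset (S := S) (b := b)
      (U := G.commonNeighborFinset A) ?_).trans ?_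
    · simp only [mem_image, mem_filter, mem_bicliqueFinset]
      rintro _ ⟨p, ⟨⟨⟨-, hB, hBA⟩, hSB⟩, rfl⟩, rfl⟩
      exact ⟨hSB, hBA, hB⟩
    · rw [hS]
      exact Nat.choose_le_choose _ (by omega)
  calc #{p ∈ G.bicliqueFinset a b | S ⊆ p.2}
      ≤ (card β - 1 - card α).choose (b - card α) *
          #((G.commonNeighborFinset S).powersetCard a) :=
        card_le_mul_card_image_of_maps_to hmaps _ hfiber
    _ ≤ (card β - 1 - card α).choose (b - card α) * (card β - 1).choose a := by
        rw [card_powersetCard]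
        have := card_commonNeighborFinset_lt hfree hS.ge
        gcongr
        omega

lemma card_bicliqueFinset_le (hfree : (completeBipartiteGraph α β).Free G) {a b : ℕ}
    (ha : card α ≤ a) (hb : card α ≤ b) :
    #(G.bicliqueFinset a b) ≤
      (card β - 1).choose a * (card β - 1 - card α).choose (b - card α) *
        (card V).choose (card α) := by
  have hcover : G.bicliqueFinset a b ⊆
      (univ.powersetCard (card α)).biUnion fun S => {p ∈ G.bicliqueFinset a b | S ⊆ p.2} := by
    intro p hp
    obtain ⟨S, hSB, hS⟩ := exists_subset_card_eq (hb.trans (mem_bicliqueFinset.1 hp).2.1.ge)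
    exact mem_biUnion.2 ⟨S, mem_powersetCard.2 ⟨subset_univ S, hS⟩, mem_filter.2 ⟨hp, hSB⟩⟩
  calc #(G.bicliqueFinset a b)
      ≤ #(univ.powersetCard (card α)) *
          ((card β - 1 - card α).choose (b - card α) * (card β - 1).choose a) :=
        (card_le_card hcover).trans <| card_biUnion_le_card_mul _ _ _ fun S hS =>
          card_filter_superset_bicliqueFinset_le hfree ha (mem_powersetCard.1 hS).2
    _ = (card β - 1).choose a * (card β - 1 - card α).choose (b - card α) *
          (card V).choose (card α) := by
        rw [card_powersetCard, card_univ]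
        ring

end Bicliques

end SimpleGraph

namespace SimpleGraph.Copy

open Finset Fintype

variable {V α β : Type*} {G : SimpleGraph V} (c : Copy (_root_.completeBipartiteGraph α β) G)

def leftPart [Fintype α] : Finset V := univ.map (Function.Embedding.inl.trans c.toEmbedding)

def rightPart [Fintype β] : Finset V := univ.map (Function.Embedding.inr.trans c.toEmbedding)

@[simp]
lemma mem_leftPart [Fintype α] {v : V} : v ∈ c.leftPart ↔ ∃ i, c (Sum.inl i) = v := by
  simp [leftPart, toEmbedding]

@[simp]
lemma mem_rightPart [Fintype β] {v : V} : v ∈ c.rightPart ↔ ∃ j, c (Sum.inr j) = v := by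
  simp [rightPart, toEmbedding]

variable [Fintype α] [Fintype β]

lemma mem_toSubgraph_verts_iff {v : V} :
    v ∈ c.toSubgraph.verts ↔ v ∈ c.leftPart ∨ v ∈ c.rightPart := by
  simp

lemma toSubgraph_adj_iff {u v : V} :
    c.toSubgraph.Adj u v ↔
      u ∈ c.leftPart ∧ v ∈ c.rightPart ∨ u ∈ c.rightPart ∧ v ∈ c.leftPart := by
  rw [Subgraph.map_adj, Relation.map_apply]
  simp [Sum.exists]

lemma toSubgraph_eq_of_parts_eq {c c' : Copy (_root_.completeBipartiteGraph α β) G}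
    (hl : c.leftPart = c'.leftPart) (hr : c.rightPart = c'.rightPart) :
    c.toSubgraph = c'.toSubgraph := by
  ext u v
  · simp only [mem_toSubgraph_verts_iff, hl, hr]
  · simp only [toSubgraph_adj_iff, hl, hr]

lemma parts_mem_bicliqueFinset [Fintype V] [DecidableEq V] [DecidableRel G.Adj] :
    (c.leftPart, c.rightPart) ∈ G.bicliqueFinset (card α) (card β) := by
  refine mem_bicliqueFinset.2 ⟨by simp [leftPart], by simp [rightPart], fun v hv => ?_⟩
  obtain ⟨j, rfl⟩ := c.mem_rightPart.1 hv
  refine mem_commonNeighborFinset.2 fun x hx => ?_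
  obtain ⟨i, rfl⟩ := c.mem_leftPart.1 hx
  exact c.toHom.map_adj (by simp)

end SimpleGraph.Copy

open Finset Fintype

lemma containsCopy_iff_isContained {α β : Type*} {F : SimpleGraph α} {G : SimpleGraph β} :
    ContainsCopy F G ↔ F ⊑ G :=
  ⟨fun ⟨f, hf⟩ => ⟨⟨f, hf⟩⟩, fun ⟨c⟩ => ⟨c.toHom, c.injective⟩⟩

lemma copyCount_completeBipartiteGraph_le_card_bicliqueFinset {V α β : Type*} [Fintype V]
    [DecidableEq V] [Fintype α] [Fintype β] (G : SimpleGraph V) [DecidableRel G.Adj] :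
    _root_.copyCount (completeBipartiteGraph α β) G ≤ #(G.bicliqueFinset (card α) (card β)) := by
  have hsurj (G' : {G' : G.Subgraph // Nonempty (completeBipartiteGraph α β ≃g G'.coe)}) :
      ∃ c : Copy (completeBipartiteGraph α β) G, c.toSubgraph = G'.1 := by
    obtain ⟨c, -, hc⟩ := Copy.toSubgraph_surjOn G'.2
    exact ⟨c, hc⟩
  choose c hc using hsurj
  rw [_root_.copyCount, ← Fintype.card_coe, ← Nat.card_eq_fintype_card]
  refine Nat.card_le_card_of_injective
    (fun G' => ⟨((c G').leftPart, (c G').rightPart), (c G').parts_mem_bicliqueFinset⟩)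
    fun G₁ G₂ h => ?_
  simp only [Subtype.mk.injEq, Prod.mk.injEq] at h
  exact Subtype.ext <| (hc G₁).symm.trans <| (Copy.toSubgraph_eq_of_parts_eq h.1 h.2).trans (hc G₂)

theorem stmt18_general (a b s t : ℕ) (hsa : s ≤ a) (hab : a ≤ b) (n : ℕ) :
    exGen n (Kbip a b) (Kbip s t) ≤
      Nat.choose (t - 1) a * Nat.choose (t - 1 - s) (b - s) * Nat.choose n s := by
  refine csSup_le' ?_
  rintro m ⟨G, hfree, rfl⟩
  classical
  rw [containsCopy_iff_isContained] at hfree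
  calc _root_.copyCount (Kbip a b) G ≤ #(G.bicliqueFinset a b) := by
        simpa using
          copyCount_completeBipartiteGraph_le_card_bicliqueFinset (α := Fin a) (β := Fin b) G
    _ ≤ _ := by
        simpa using card_bicliqueFinset_le hfree (by simpa using hsa) (by simpa using hsa.trans hab)

/-- if `s ≤ a ≤ b ≤ t`, then for every positive `n`,
`ex(n, K_{a,b}, K_{s,t}) ≤ C(t-1,a)·C(t-1-s,b-s)·C(n,s)`. -/
theorem stmt18 (a b s t : ℕ) (hs : 0 < s) (ha : 0 < a) (hb : 0 < b) (ht : 0 < t)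
    (hsa : s ≤ a) (hab : a ≤ b) (hbt : b ≤ t) (n : ℕ) (hn : 0 < n) :
    exGen n (Kbip a b) (Kbip s t) ≤
      Nat.choose (t - 1) a * Nat.choose (t - 1 - s) (b - s) * Nat.choose n s :=
  stmt18_general a b s t hsa hab n
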